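/- The continuous q-Hermite polynomials are eigenfunctions of the operator \mu = (z-z^{-1})^{-1}(-z^{-1} T_z^{1/2} + z T_z^{-1/2}) with eigenvalue q^{-n/2}: \mu H_n = q^{-n/2} H_n. -/
import Mathlib


open Finset Complex

/-- `(q;q)_n`. -/
noncomputable def qp (q : ℂ) (n : ℕ) : ℂ := ∏ k ∈ range n, (1 - q ^ (k + 1))

/-- The continuous q-Hermite polynomial `H_n(x|q)` with `x = (z + z⁻¹)/2`
(for `z = e^{iθ}` this is `∑ₖ ((q;q)ₙ/((q;q)ₖ(q;q)_{n-k})) e^{i(n-2k)θ}`),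
written as a symmetric Laurent polynomial in `z`. -/
noncomputable def Hq (q : ℂ) (n : ℕ) (z : ℂ) : ℂ :=
  ∑ k ∈ range (n + 1), qp q n / (qp q k * qp q (n - k)) * z ^ ((n : ℤ) - 2 * k)

lemma one_sub_pow_ne {q : ℝ} (hq0 : 0 < q) (hq1 : q < 1) {m : ℕ} (hm : m ≠ 0) :
    (1 : ℂ) - (q : ℂ) ^ m ≠ 0 := by
  have h1 : q ^ m < 1 := pow_lt_one₀ hq0.le hq1 hm
  have h2 : (q : ℂ) ^ m = ((q ^ m : ℝ) : ℂ) := by push_cast; ring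
  rw [h2, sub_ne_zero]
  exact_mod_cast h1.ne'

lemma qp_ne_zero {q : ℝ} (hq0 : 0 < q) (hq1 : q < 1) (m : ℕ) : qp (q : ℂ) m ≠ 0 :=
  Finset.prod_ne_zero_iff.mpr fun k _ => one_sub_pow_ne hq0 hq1 (Nat.succ_ne_zero k)

lemma coeff_rec {q : ℝ} (hq0 : 0 < q) (hq1 : q < 1) {n k : ℕ} (hk : k < n) :
    qp (q : ℂ) n / (qp (q : ℂ) (k + 1) * qp (q : ℂ) (n - (k + 1))) * ((q : ℂ) ^ (k + 1) - 1)
      = qp (q : ℂ) n / (qp (q : ℂ) k * qp (q : ℂ) (n - k)) * ((q : ℂ) ^ (n - k) - 1) := by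
  have h2 : n - k = (n - (k + 1)) + 1 := by omega
  have h1 : qp (q : ℂ) (k + 1) = qp (q : ℂ) k * (1 - (q : ℂ) ^ (k + 1)) :=
    Finset.prod_range_succ _ _
  have h3 : qp (q : ℂ) (n - k) = qp (q : ℂ) (n - (k + 1)) * (1 - (q : ℂ) ^ (n - k)) := by
    rw [h2]
    show qp _ ((n - (k+1)) + 1) = _
    rw [qp, Finset.prod_range_succ, ← qp, ← h2]
  have hA := qp_ne_zero hq0 hq1 k
  have hB := qp_ne_zero hq0 hq1 (n - (k + 1))
  have hC := one_sub_pow_ne hq0 hq1 (Nat.succ_ne_zero k)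
  have hD : (1:ℂ) - (q:ℂ)^(n-k) ≠ 0 := one_sub_pow_ne hq0 hq1 (by omega)
  rw [h1, h3]
  field_simp
  ring

lemma key_shift {q : ℝ} (hq0 : 0 < q) (hq1 : q < 1) (n : ℕ) (z : ℂ) :
    ∑ k ∈ range (n + 1),
        qp (q : ℂ) n / (qp (q : ℂ) k * qp (q : ℂ) (n - k)) * ((q : ℂ) ^ k - 1)
          * z ^ ((n : ℤ) - 2 * k + 1)
      = ∑ k ∈ range (n + 1),
          qp (q : ℂ) n / (qp (q : ℂ) k * qp (q : ℂ) (n - k)) * ((q : ℂ) ^ (n - k) - 1)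
            * z ^ ((n : ℤ) - 2 * k - 1) := by
  rw [Finset.sum_range_succ' _ n, Finset.sum_range_succ]
  have h0 : qp (q : ℂ) n / (qp (q : ℂ) 0 * qp (q : ℂ) (n - 0)) * ((q : ℂ) ^ (0:ℕ) - 1)
      * z ^ ((n : ℤ) - 2 * (0:ℕ) + 1) = 0 := by simp
  have hn : qp (q : ℂ) n / (qp (q : ℂ) n * qp (q : ℂ) (n - n)) * ((q : ℂ) ^ (n - n) - 1)
      * z ^ ((n : ℤ) - 2 * n - 1) = 0 := by simp [Nat.sub_self]
  rw [h0, hn, add_zero, add_zero]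
  refine Finset.sum_congr rfl fun k hk => ?_
  have hk' : k < n := Finset.mem_range.mp hk
  rw [coeff_rec hq0 hq1 hk']
  rw [show (n : ℤ) - 2 * ((k:ℕ)+1 : ℕ) + 1 = (n : ℤ) - 2 * k - 1 by push_cast; ring]

/-- `Hₙ` is an eigenfunction of `μ g (z) = (-z⁻¹ g(q^{1/2}z) + z g(q^{-1/2}z))/(z - z⁻¹)`
with eigenvalue `q^{-n/2}`, where `q = s²`. -/
theorem mu_eigen_qHermite (q s : ℝ) (hq0 : 0 < q) (hq1 : q < 1) (hs : 0 < s)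
    (hsq : s ^ 2 = q) (n : ℕ) (z : ℂ)
    (hz0 : z ≠ 0) (hz1 : z ≠ 1) (hz2 : z ≠ -1) :
    (-z⁻¹ * Hq (q : ℂ) n ((s : ℂ) * z) + z * Hq (q : ℂ) n (z / (s : ℂ))) / (z - z⁻¹) =
      (s : ℂ) ^ (-(n : ℤ)) * Hq (q : ℂ) n z := by
  have hs0 : (s : ℂ) ≠ 0 := by exact_mod_cast hs.ne'
  have hsq' : (s : ℂ) ^ 2 = (q : ℂ) := by exact_mod_cast hsq
  have hq0' : (q : ℂ) ≠ 0 := by exact_mod_cast hq0.ne'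
  have hzz : z - z⁻¹ ≠ 0 := by
    have h : z - z⁻¹ = (z - 1) * (z + 1) / z := by field_simp; ring
    rw [h]
    exact div_ne_zero (mul_ne_zero (sub_ne_zero.mpr hz1)
      (by intro h'; exact hz2 (by linear_combination h'))) hz0
  rw [div_eq_iff hzz]
  have main : -z⁻¹ * Hq (q : ℂ) n ((s : ℂ) * z) + z * Hq (q : ℂ) n (z / (s : ℂ))
      = (s : ℂ) ^ (-(n : ℤ)) * Hq (q : ℂ) n z * (z - z⁻¹)
        + (s : ℂ) ^ (-(n : ℤ)) *
          ((∑ k ∈ range (n + 1),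
              qp (q : ℂ) n / (qp (q : ℂ) k * qp (q : ℂ) (n - k)) * ((q : ℂ) ^ k - 1)
                * z ^ ((n : ℤ) - 2 * k + 1))
            - ∑ k ∈ range (n + 1),
                qp (q : ℂ) n / (qp (q : ℂ) k * qp (q : ℂ) (n - k)) * ((q : ℂ) ^ (n - k) - 1)
                  * z ^ ((n : ℤ) - 2 * k - 1)) := by
    rw [Hq, Hq, Hq, Finset.mul_sum, Finset.mul_sum, Finset.mul_sum, Finset.sum_mul,
      ← Finset.sum_sub_distrib, Finset.mul_sum, ← Finset.sum_add_distrib,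
      ← Finset.sum_add_distrib]
    refine Finset.sum_congr rfl fun k hk => ?_
    have hkn : k ≤ n := Nat.lt_succ_iff.mp (Finset.mem_range.mp hk)
    set c : ℂ := qp (q : ℂ) n / (qp (q : ℂ) k * qp (q : ℂ) (n - k)) with hc
    set m : ℤ := (n : ℤ) - 2 * k with hm
    have C : (s : ℂ) ^ m = (q : ℂ) ^ (n - k) * (s : ℂ) ^ (-(n : ℤ)) := by
      have h : m = ((2 * (n - k) : ℕ) : ℤ) + (-(n : ℤ)) := by
        rw [hm]; push_cast [hkn]; ring
      rw [h, zpow_add₀ hs0, zpow_natCast, pow_mul, hsq']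
    have C' : (s : ℂ) ^ (-m) = (q : ℂ) ^ k * (s : ℂ) ^ (-(n : ℤ)) := by
      have h : -m = ((2 * k : ℕ) : ℤ) + (-(n : ℤ)) := by rw [hm]; push_cast; ring
      rw [h, zpow_add₀ hs0, zpow_natCast, pow_mul, hsq']
    rw [mul_zpow, div_zpow, div_eq_mul_inv (z^m) ((s:ℂ)^m), ← zpow_neg,
      zpow_add_one₀ hz0, zpow_sub_one₀ hz0, C, C']
    ring
  rw [main, key_shift hq0 hq1, sub_self, mul_zero, add_zero]
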